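/- arXiv:1309.5125 — 3 statements merged into one kernel-verified Lean document; each statement's English description precedes it below -/
import Mathlib

section
/- Let D be a finite-dimensional central division algebra over a field K with D not isomorphic to K. If |gen(D)| = 1, i.e., every finite-dimensional central division K-algebra having the same isomorphism classes of maximal subfields as D is K-isomorphic to D, then D is K-isomorphic to its opposite algebra D^op; equivalently, the class of D in the Brauer group Br(K) has order 2, so exp(D) = 2. -/
open scoped TensorProduct

universe u

/-- `M` is a *maximal subfield* of the division algebra `D` over `K`:
a commutative `K`-subalgebra that is closed under inverses (hence a field)
and maximal among commutative `K`-subalgebras. -/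
def IsMaximalSubfield (K : Type*) [Field K] (D : Type*) [DivisionRing D] [Algebra K D]
    (M : Subalgebra K D) : Prop :=
  (∀ x ∈ M, ∀ y ∈ M, x * y = y * x) ∧
  (∀ x ∈ M, x⁻¹ ∈ M) ∧
  ∀ N : Subalgebra K D, (∀ x ∈ N, ∀ y ∈ N, x * y = y * x) → M ≤ N → N = M

/-- `D` and `D'` have the same maximal subfields, up to `K`-isomorphism:
every maximal subfield of one is `K`-isomorphic to a maximal subfield of the other.
This says exactly that a field extension of `K` is `K`-isomorphic to a maximal
subfield of `D` iff it is `K`-isomorphic to a maximal subfield of `D'`. -/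
def SameMaximalSubfields (K : Type*) [Field K] (D : Type*) [DivisionRing D] [Algebra K D]
    (D' : Type*) [DivisionRing D'] [Algebra K D'] : Prop :=
  (∀ M : Subalgebra K D, IsMaximalSubfield K D M →
    ∃ M' : Subalgebra K D', IsMaximalSubfield K D' M' ∧ Nonempty (M ≃ₐ[K] M')) ∧
  (∀ M' : Subalgebra K D', IsMaximalSubfield K D' M' →
    ∃ M : Subalgebra K D, IsMaximalSubfield K D M ∧ Nonempty (M ≃ₐ[K] M'))

/-- `D` has exponent `2` in the Brauer group of `K`: `D` is not (split) isomorphic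
to `K`, but the class of `D ⊗[K] D` in `Br K` is trivial, i.e. `D ⊗[K] D` is a
matrix algebra over `K`. -/
def HasExponentTwo (K : Type*) [Field K] (D : Type*) [Ring D] [Algebra K D] : Prop :=
  (¬ Nonempty (D ≃ₐ[K] K)) ∧
  ∃ n : ℕ, 0 < n ∧ Nonempty ((D ⊗[K] D) ≃ₐ[K] Matrix (Fin n) (Fin n) K)

/-- `|gen(D)| = 1`: every finite-dimensional central division `K`-algebra having the
same (isomorphism classes of) maximal subfields as `D` is `K`-isomorphic to `D`. -/
def GenusOne (K : Type u) [Field K] (D : Type u) [DivisionRing D] [Algebra K D] : Prop :=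
  ∀ (D' : Type u) [DivisionRing D'] [Algebra K D'],
    FiniteDimensional K D' → Algebra.IsCentral K D' →
    SameMaximalSubfields K D D' → Nonempty (D' ≃ₐ[K] D)

/-! The opposite algebra `Dᵐᵒᵖ` is again central of the same dimension, its maximal subfields
are the opposites `Mᵐᵒᵖ` of those of `D`, and a commutative `M` is isomorphic to `Mᵐᵒᵖ`; so `Dᵐᵒᵖ`
lies in the genus of `D`, and genus one forces `D ≃ Dᵐᵒᵖ`. Hence `D ⊗ D ≃ D ⊗ Dᵐᵒᵖ`, and the sandwich
map `a ⊗ b ↦ (x ↦ a x b)` identifies `D ⊗ Dᵐᵒᵖ` with `End_K D`, a matrix algebra over `K`.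
That map is injective by the classical independence argument: a shortest relation
`∑ aᵢ x eᵢ = 0` (for all `x`) can be normalised to have a coefficient `1`, commutators with `y`
give shorter relations, so all coefficients are central and the relation at `x = 1` contradicts
the independence of the `eᵢ`; surjectivity is a dimension count. -/

namespace Subalgebra

variable {K D : Type*} [CommRing K] [Ring D] [Algebra K D]

theorem op_commute_iff (M : Subalgebra K D) :
    (∀ x ∈ M.op, ∀ y ∈ M.op, x * y = y * x) ↔ ∀ x ∈ M, ∀ y ∈ M, x * y = y * x := by
  simp only [MulOpposite.forall, mem_op, MulOpposite.unop_op, ← MulOpposite.op_mul,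
    MulOpposite.op_inj]
  exact ⟨fun h x hx y hy => (h x hx y hy).symm, fun h x hx y hy => (h x hx y hy).symm⟩

def algEquivOpOfCommute (M : Subalgebra K D) (hM : ∀ x ∈ M, ∀ y ∈ M, x * y = y * x) :
    M ≃ₐ[K] M.op :=
  AlgEquiv.ofLinearEquiv M.linearEquivOp rfl fun x y =>
    Subtype.ext <| MulOpposite.unop_injective <| hM _ x.2 _ y.2

end Subalgebra

section MaximalSubfield

variable {K D : Type*} [Field K] [DivisionRing D] [Algebra K D]

theorem isMaximalSubfield_op_iff (M : Subalgebra K D) :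
    IsMaximalSubfield K Dᵐᵒᵖ M.op ↔ IsMaximalSubfield K D M := by
  refine and_congr M.op_commute_iff (and_congr ?_ ?_)
  · simp [MulOpposite.forall]
  · have op_inj (N : Subalgebra K D) : N.op = M.op ↔ N = M := Subalgebra.opEquiv.injective.eq_iff
    rw [Subalgebra.opEquiv.surjective.forall]
    simp only [Subalgebra.opEquiv_apply, Subalgebra.op_commute_iff, Subalgebra.op_le_op_iff,
      op_inj]

variable (K D) in
theorem sameMaximalSubfields_op : SameMaximalSubfields K D Dᵐᵒᵖ :=
  ⟨fun M hM => ⟨M.op, (isMaximalSubfield_op_iff M).2 hM, ⟨M.algEquivOpOfCommute hM.1⟩⟩,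
    fun N hN => ⟨N.unop, (isMaximalSubfield_op_iff N.unop).1 hN,
      ⟨N.unop.algEquivOpOfCommute ((isMaximalSubfield_op_iff N.unop).1 hN).1⟩⟩⟩

end MaximalSubfield

namespace Algebra.IsCentral

variable {K D : Type*} [Field K] [DivisionRing D] [Algebra K D] [Algebra.IsCentral K D]

theorem eq_zero_of_forall_sum_mul_mul_eq_zero {ι : Type*} {e : ι → D}
    (he : LinearIndependent K e) (s : Finset ι) (a : ι → D)
    (h : ∀ x, ∑ i ∈ s, a i * x * e i = 0) : ∀ i ∈ s, a i = 0 := by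
  classical
  induction s using Finset.strongInduction generalizing a with
  | H s ih =>
  by_contra! ⟨j, hj, haj⟩
  set b : ι → D := fun i => (a j)⁻¹ * a i with hb
  have hbj : b j = 1 := inv_mul_cancel₀ haj
  have hb_sum (x : D) : ∑ i ∈ s, b i * x * e i = 0 := by
    simp only [hb, mul_assoc, ← Finset.mul_sum]
    simp only [← mul_assoc, h x, mul_zero]
  have hb_comm (i : ι) (hi : i ∈ s) (y : D) : b i * y = y * b i := by
    by_cases hij : i = j
    · rw [hij, hbj, one_mul, mul_one]
    refine sub_eq_zero.1 <| ih (s.erase j) (Finset.erase_ssubset hj) (fun i => b i * y - y * b i)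
      (fun x => ?_) i (Finset.mem_erase.2 ⟨hij, hi⟩)
    rw [Finset.sum_erase _ (by simp [hbj])]
    calc ∑ i ∈ s, (b i * y - y * b i) * x * e i
        = ∑ i ∈ s, b i * (y * x) * e i - y * ∑ i ∈ s, b i * x * e i := by
          simp only [sub_mul, Finset.sum_sub_distrib, Finset.mul_sum, mul_assoc]
      _ = 0 := by rw [hb_sum, hb_sum, mul_zero, sub_zero]
  have hb_scalar (i : ι) (hi : i ∈ s) : ∃ k : K, b i = algebraMap K D k :=
    (mem_center_iff K).1 (Subalgebra.mem_center_iff.2 fun y => (hb_comm i hi y).symm)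
  choose! k hk using hb_scalar
  have hk_sum : ∑ i ∈ s, k i • e i = 0 := by
    rw [← hb_sum 1]
    refine Finset.sum_congr rfl fun i hi => ?_
    rw [mul_one, hk i hi, Algebra.smul_def]
  have hkj : k j = 0 := linearIndependent_iff'.1 he s k hk_sum j hj
  simpa [hkj] using (hk j hj).symm.trans hbj

variable (K D) in
theorem mulLeftRight_injective : Function.Injective (AlgHom.mulLeftRight K D) := by
  classical
  let ℬ := Module.Free.chooseBasis K D
  rw [injective_iff_map_eq_zero]
  intro z hz
  obtain ⟨b, rfl⟩ := TensorProduct.eq_repr_basis_right (ℬ.map (MulOpposite.opLinearEquiv K)) z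
  have hb : ∀ i ∈ b.support, b i = 0 := by
    refine eq_zero_of_forall_sum_mul_mul_eq_zero ℬ.linearIndependent b.support b fun x => ?_
    simpa [Finsupp.sum, AlgHom.mulLeftRight_apply] using congr($hz x)
  exact Finset.sum_eq_zero fun i hi => by simp [hb i hi]

variable (K D) in
theorem mulLeftRight_bijective [FiniteDimensional K D] :
    Function.Bijective (AlgHom.mulLeftRight K D) := by
  have hinj := mulLeftRight_injective K D
  refine ⟨hinj, (LinearMap.injective_iff_surjective_of_finrank_eq_finrank
    (f := (AlgHom.mulLeftRight K D).toLinearMap) ?_).1 hinj⟩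
  rw [Module.finrank_tensorProduct, Module.finrank_linearMap,
    (MulOpposite.opLinearEquiv K (M := D)).finrank_eq.symm]

end Algebra.IsCentral

/-- Let `D` be a finite-dimensional central division algebra over `K` with `D` not
isomorphic to `K`.  If `|gen(D)| = 1` — every finite-dimensional central division
`K`-algebra with the same isomorphism classes of maximal subfields as `D` is
`K`-isomorphic to `D` — then `D` is `K`-isomorphic to its opposite algebra `Dᵐᵒᵖ`;
equivalently, the class of `D` in `Br K` has order `2`, i.e. `exp(D) = 2`. -/
theorem genus_one_implies_exponent_two (K : Type u) [Field K] (D : Type u)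
    [DivisionRing D] [Algebra K D] [FiniteDimensional K D]
    (hc : Algebra.IsCentral K D) (hne : ¬ Nonempty (D ≃ₐ[K] K))
    (hgen : GenusOne K D) :
    Nonempty (D ≃ₐ[K] Dᵐᵒᵖ) ∧ HasExponentTwo K D := by
  have := hc
  obtain ⟨σ⟩ := hgen Dᵐᵒᵖ inferInstance inferInstance (sameMaximalSubfields_op K D)
  refine ⟨⟨σ.symm⟩, hne, Module.finrank K D, Module.finrank_pos, ⟨?_⟩⟩
  exact (Algebra.TensorProduct.congr AlgEquiv.refl σ.symm).trans <|
    (AlgEquiv.ofBijective _ (Algebra.IsCentral.mulLeftRight_bijective K D)).trans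
      (algEquivMatrix (Module.finBasis K D))
end

section
/- (Nagao) For every finite field F, the group SL_2(F[t]) of 2×2 matrices of determinant 1 with entries in the polynomial ring F[t] is not finitely generated. -/
/-!
Let `degreeSubgroup N` be generated by `w = !![0, 1; -1, 0]` and the upper triangular matrices
whose upper-right entry has degree at most `N`. Euclidean division in `F[X]` shows that
`SL(2, F[X])` is the increasing union of these subgroups, so a finite generating set would lie
in a single one of them. But every element of `degreeSubgroup N` has the form
`h * ew p₁ * ⋯ * ew pₖ * b` with `h` constant, `b` upper triangular of degree `≤ N` and
`0 < deg pᵢ ≤ N`, where `ew p = !![1, p; 0, 1] * w`. For `k > 0` the first column of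
`ew p₁ * ⋯ * ew pₖ` has a nonzero bottom entry of smaller degree than the top one, and this
keeps the lower-left entry of `h * ew p₁ * ⋯ * ew pₖ * b` nonzero. Hence the upper-right entry of an upper triangular element of
`degreeSubgroup N` has degree `≤ N`, which rules out `!![1, X ^ (N + 1); 0, 1]`.
-/

open Polynomial Matrix MatrixGroups

namespace Nagao

section CommRing

variable {R : Type*} [CommRing R]

def upper (u : Rˣ) (q : R) : SL(2, R) :=
  ⟨!![(u : R), q; 0, ↑u⁻¹], by simp [det_fin_two_of]⟩

def w : SL(2, R) := ⟨!![0, 1; -1, 0], by simp [det_fin_two_of]⟩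

def ew (p : R) : SL(2, R) := ⟨!![-p, 1; -1, 0], by simp [det_fin_two_of]⟩

def word (ps : List R) : SL(2, R) := (ps.map ew).prod

@[simp] theorem coe_upper (u : Rˣ) (q : R) :
    (upper u q : Matrix (Fin 2) (Fin 2) R) = !![(u : R), q; 0, ↑u⁻¹] := rfl

@[simp] theorem coe_w : ((w : SL(2, R)) : Matrix (Fin 2) (Fin 2) R) = !![0, 1; -1, 0] := rfl

@[simp] theorem coe_ew (p : R) : (ew p : Matrix (Fin 2) (Fin 2) R) = !![-p, 1; -1, 0] := rfl

theorem upper_mul_upper (u v : Rˣ) (q r : R) :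
    upper u q * upper v r = upper (u * v) (u * r + ↑v⁻¹ * q) := by
  ext i j; fin_cases i <;> fin_cases j <;> simp [mul_apply] <;> ring

theorem upper_one_zero : upper (1 : Rˣ) 0 = 1 := by
  ext i j; fin_cases i <;> fin_cases j <;> simp

theorem upper_inv (u : Rˣ) (q : R) : (upper u q)⁻¹ = upper u⁻¹ (-q) := by
  rw [inv_eq_iff_mul_eq_one, upper_mul_upper, mul_inv_cancel, inv_inv, mul_neg, neg_add_cancel,
    upper_one_zero]

theorem w_mul_w : (w : SL(2, R)) * w = upper (-1) 0 := by
  ext i j; fin_cases i <;> fin_cases j <;> simp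

theorem w_inv : (w : SL(2, R))⁻¹ = w * upper (-1) 0 := by
  rw [inv_eq_iff_mul_eq_one, ← mul_assoc, w_mul_w, upper_mul_upper]
  simp [upper_one_zero]

theorem upper_mul_w (u : Rˣ) (q : R) : upper u q * w = upper u 0 * ew (↑u⁻¹ * q) := by
  ext i j; fin_cases i <;> fin_cases j <;> simp [mul_apply]

theorem ew_mul_upper_zero (p : R) (u : Rˣ) :
    ew p * upper u 0 = upper u⁻¹ 0 * ew (u * u * p) := by
  ext i j; fin_cases i <;> fin_cases j <;> simp [mul_apply]
  rw [mul_assoc, Units.inv_mul_cancel_left, mul_comm]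

theorem ew_mul_ew_zero (r : R) : ew r * ew 0 = upper (-1) (-r) := by
  ext i j; fin_cases i <;> fin_cases j <;> simp [mul_apply]

theorem ew_mul_ew_unit (r : R) (u : Rˣ) :
    ew r * ew (u : R) = ew (r - ↑u⁻¹) * upper (-u) 1 := by
  ext i j; fin_cases i <;> fin_cases j <;> simp [mul_apply, sub_mul] <;> ring

theorem word_nil : word ([] : List R) = 1 := rfl

theorem word_cons (p : R) (ps : List R) : word (p :: ps) = ew p * word ps := by
  simp [word]

theorem word_append_singleton (ps : List R) (p : R) : word (ps ++ [p]) = word ps * ew p := by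
  simp [word]

theorem exists_eq_upper_of_apply_one_zero_eq_zero {g : SL(2, R)}
    (hg : g 1 0 = 0) :
    ∃ u : Rˣ, g = upper u (g 0 1) := by
  have hdet := g.2
  rw [det_fin_two, hg, mul_zero, sub_zero] at hdet
  refine ⟨⟨_, _, hdet, by rw [mul_comm, hdet]⟩, ?_⟩
  ext i j; fin_cases i <;> fin_cases j <;> simp [hg]

theorem w_mul_upper_one_mul_apply_one_zero (q : R) (g : SL(2, R)) :
    (w * (upper 1 q * g) : SL(2, R)) 1 0 =
      -(g 0 0 + q * g 1 0) := by
  simp [mul_apply, vecMul, dotProduct]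

theorem word_cons_apply_zero_zero (p : R) (ps : List R) :
    word (p :: ps) 0 0 =
      -p * word ps 0 0 + word ps 1 0 := by
  simp [word_cons, mul_apply]

theorem word_cons_apply_one_zero (p : R) (ps : List R) :
    word (p :: ps) 1 0 = -word ps 0 0 := by
  simp [word_cons, mul_apply]

end CommRing

section Polynomial

variable {F : Type*} [Field F]

theorem degree_lt_degree_mul_of_degree_pos {p x : F[X]} (hp : 0 < p.degree) (hx : x ≠ 0) :
    x.degree < (p * x).degree := by
  have hp0 : p ≠ 0 := ne_zero_of_degree_gt hp
  apply degree_lt_degree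
  rw [natDegree_mul hp0 hx]
  have := natDegree_pos_iff_degree_pos.mpr hp
  omega

theorem add_mul_ne_zero_of_degree_lt {a b x y : F[X]} (ha : a.degree ≤ 0) (hb : b.degree ≤ 0)
    (hab : a ≠ 0 ∨ b ≠ 0) (hxy : y.degree < x.degree) (hy : y ≠ 0) :
    a * x + b * y ≠ 0 := by
  rcases eq_or_ne a 0 with rfl | ha0
  · simpa [hy] using hab
  have hax : (a * x).degree = x.degree := by
    rw [degree_mul, le_antisymm ha (zero_le_degree_iff.mpr ha0), zero_add]
  have hby : (b * y).degree < (a * x).degree :=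
    hax ▸ (degree_mul_le _ _).trans_lt ((add_le_add_left hb _).trans_lt (by rwa [zero_add]))
  intro h0
  have := degree_add_eq_left_of_degree_lt hby
  rw [h0, hax, degree_zero] at this
  exact (bot_le.trans_lt hxy).ne this

def IsConstant (g : SL(2, F[X])) : Prop := ∀ i j, (g i j).degree ≤ 0

theorem IsConstant.mul {g h : SL(2, F[X])} (hg : IsConstant g) (hh : IsConstant h) :
    IsConstant (g * h) := by
  intro i j
  rw [Matrix.SpecialLinearGroup.coe_mul, mul_apply, Fin.sum_univ_two]
  refine (degree_add_le _ _).trans (max_le ?_ ?_) <;>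
    exact (degree_mul_le _ _).trans (by simpa using add_le_add (hg _ _) (hh _ _))

theorem isConstant_one : IsConstant (1 : SL(2, F[X])) := by
  intro i j; fin_cases i <;> fin_cases j <;> simp

theorem isConstant_upper_zero (u : F[X]ˣ) : IsConstant (upper u 0) := by
  intro i j; fin_cases i <;> fin_cases j <;> simp [degree_coe_units, -Units.val_inv_eq_inv_val]

theorem isConstant_ew {m : F[X]} (hm : m.degree ≤ 0) : IsConstant (ew m) := by
  intro i j; fin_cases i <;> fin_cases j <;> simp [hm]

def boundedUpper (N : ℕ) : Subgroup SL(2, F[X]) where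
  carrier := {g | ∃ (u : F[X]ˣ) (q : F[X]), q.degree ≤ N ∧ g = upper u q}
  mul_mem' := by
    rintro _ _ ⟨u, q, hq, rfl⟩ ⟨v, r, hr, rfl⟩
    refine ⟨u * v, _, (degree_add_le _ _).trans (max_le ?_ ?_), upper_mul_upper u v q r⟩ <;>
      simpa [degree_mul, degree_coe_units, -Units.val_inv_eq_inv_val]
  one_mem' := ⟨1, 0, by simp, upper_one_zero.symm⟩
  inv_mem' := by
    rintro _ ⟨u, q, hq, rfl⟩
    exact ⟨u⁻¹, -q, by rwa [degree_neg], upper_inv u q⟩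

theorem upper_mem_boundedUpper {N : ℕ} (u : F[X]ˣ) {q : F[X]} (hq : q.degree ≤ N) :
    upper u q ∈ boundedUpper N :=
  ⟨u, q, hq, rfl⟩

theorem boundedUpper_mono : Monotone (boundedUpper (F := F)) := by
  rintro N M hNM _ ⟨u, q, hq, rfl⟩
  exact upper_mem_boundedUpper u (hq.trans (by exact_mod_cast hNM))

noncomputable def degreeSubgroup (N : ℕ) : Subgroup SL(2, F[X]) :=
  Subgroup.closure (insert w (boundedUpper (F := F) N : Set SL(2, F[X])))

theorem degreeSubgroup_mono : Monotone (degreeSubgroup (F := F)) :=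
  fun _ _ hNM => Subgroup.closure_mono (Set.insert_subset_insert (boundedUpper_mono hNM))

theorem w_mem_degreeSubgroup (N : ℕ) : w ∈ degreeSubgroup (F := F) N :=
  Subgroup.subset_closure (Set.mem_insert _ _)

theorem mem_degreeSubgroup_of_mem_boundedUpper {N : ℕ} {g : SL(2, F[X])}
    (hg : g ∈ boundedUpper N) : g ∈ degreeSubgroup N :=
  Subgroup.subset_closure (Set.mem_insert_of_mem _ hg)

theorem exists_mem_degreeSubgroup (g : SL(2, F[X])) : ∃ N, g ∈ degreeSubgroup N := by
  suffices ∀ d : WithBot ℕ, ∀ g : SL(2, F[X]),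
      (g 1 0).degree = d → ∃ N, g ∈ degreeSubgroup N from
    this _ g rfl
  intro d
  induction d using WellFoundedLT.induction with
  | _ d ih =>
  rintro g rfl
  set a := g 0 0
  set c := g 1 0
  by_cases hc : c = 0
  · obtain ⟨u, hu⟩ := exists_eq_upper_of_apply_one_zero_eq_zero hc
    exact ⟨_, mem_degreeSubgroup_of_mem_boundedUpper
      (hu ▸ upper_mem_boundedUpper u degree_le_natDegree)⟩
  set g' := w * (upper 1 (-(a / c)) * g)
  have hg' : g' 1 0 = -(a % c) := by
    rw [w_mul_upper_one_mul_apply_one_zero, EuclideanDomain.mod_eq_sub_mul_div]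
    ring
  obtain ⟨N, hN⟩ := ih _ (by rw [hg', degree_neg]; exact degree_mod_lt a hc) g' rfl
  have hg : g = (upper 1 (-(a / c)))⁻¹ * (w⁻¹ * g') := by simp [g']
  refine ⟨max N (a / c).natDegree, hg ▸ mul_mem (inv_mem ?_) (mul_mem (inv_mem ?_) ?_)⟩
  · refine mem_degreeSubgroup_of_mem_boundedUpper (upper_mem_boundedUpper 1 ?_)
    rw [degree_neg]
    exact degree_le_natDegree.trans (by exact_mod_cast le_max_right _ _)
  · exact w_mem_degreeSubgroup _
  · exact degreeSubgroup_mono (le_max_left _ _) hN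

def IsReducedWord (N : ℕ) (ps : List F[X]) : Prop := ∀ p ∈ ps, 0 < p.degree ∧ p.degree ≤ N

def HasNormalForm (N : ℕ) (g : SL(2, F[X])) : Prop :=
  ∃ h ps b, IsConstant h ∧ IsReducedWord N ps ∧ b ∈ boundedUpper N ∧ g = h * word ps * b

theorem hasNormalForm_one (N : ℕ) : HasNormalForm N (1 : SL(2, F[X])) :=
  ⟨1, [], 1, isConstant_one, by simp [IsReducedWord], one_mem _, by simp [word_nil]⟩

theorem HasNormalForm.constant_mul {N : ℕ} {h g : SL(2, F[X])} (hh : IsConstant h)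
    (hg : HasNormalForm N g) : HasNormalForm N (h * g) := by
  obtain ⟨h', ps, b, hh', hps, hb, rfl⟩ := hg
  exact ⟨h * h', ps, b, hh.mul hh', hps, hb, by simp only [mul_assoc]⟩

theorem HasNormalForm.mul_of_mem_boundedUpper {N : ℕ} {g b : SL(2, F[X])} (hg : HasNormalForm N g)
    (hb : b ∈ boundedUpper N) : HasNormalForm N (g * b) := by
  obtain ⟨h, ps, b', hh, hps, hb', rfl⟩ := hg
  exact ⟨h, ps, b' * b, hh, hps, mul_mem hb' hb, by simp only [mul_assoc]⟩

theorem exists_word_mul_upper_zero {N : ℕ} {ps : List F[X]} (hps : IsReducedWord N ps)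
    (u : F[X]ˣ) :
    ∃ v ps', IsReducedWord N ps' ∧ word ps * upper u 0 = upper v 0 * word ps' := by
  induction ps with
  | nil => exact ⟨u, [], hps, by simp [word_nil]⟩
  | cons p ps ih =>
    obtain ⟨v, ps', hps', heq⟩ := ih fun q hq => hps q (List.mem_cons_of_mem p hq)
    refine ⟨v⁻¹, (v * v * p) :: ps', ?_, ?_⟩
    · rintro q (_ | ⟨_, hq⟩)
      · simpa [degree_mul, degree_coe_units] using hps p List.mem_cons_self
      · exact hps' q hq
    · rw [word_cons, mul_assoc, heq, ← mul_assoc, ew_mul_upper_zero, mul_assoc, word_cons]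

theorem isReducedWord_append_singleton {N : ℕ} {ps : List F[X]} {p : F[X]} :
    IsReducedWord N (ps ++ [p]) ↔ IsReducedWord N ps ∧ 0 < p.degree ∧ p.degree ≤ N := by
  simp only [IsReducedWord, List.mem_append, List.mem_singleton, or_imp, forall_and,
    forall_eq]
  tauto

theorem hasNormalForm_word_mul_ew {N : ℕ} {ps : List F[X]} (hps : IsReducedWord N ps) {m : F[X]}
    (hm : m.degree ≤ N) : HasNormalForm N (word ps * ew m) := by
  rcases lt_or_ge 0 m.degree with hpos | hconst
  · exact ⟨1, ps ++ [m], 1, isConstant_one,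
      isReducedWord_append_singleton.mpr ⟨hps, hpos, hm⟩, one_mem _,
      by rw [word_append_singleton, one_mul, mul_one]⟩
  rcases List.eq_nil_or_concat ps with rfl | ⟨qs, r, rfl⟩
  · exact ⟨ew m, [], 1, isConstant_ew hconst, hps, one_mem _, by simp [word_nil]⟩
  rw [List.concat_eq_append] at hps ⊢
  rw [isReducedWord_append_singleton] at hps
  obtain ⟨hqs, hr_pos, hr_le⟩ := hps
  rw [word_append_singleton, mul_assoc]
  rcases eq_or_ne m 0 with rfl | hm0
  · rw [ew_mul_ew_zero]
    exact ⟨1, qs, _, isConstant_one, hqs,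
      upper_mem_boundedUpper (-1) (q := -r) (by rwa [degree_neg]), by rw [one_mul]⟩
  obtain ⟨u, rfl⟩ : IsUnit m :=
    isUnit_iff_degree_eq_zero.mpr (le_antisymm hconst (zero_le_degree_iff.mpr hm0))
  have hdeg : (r - ↑u⁻¹).degree = r.degree :=
    degree_sub_eq_left_of_degree_lt (by rwa [degree_coe_units])
  rw [ew_mul_ew_unit, ← mul_assoc, ← word_append_singleton]
  exact ⟨1, qs ++ [r - ↑u⁻¹], _, isConstant_one,
    isReducedWord_append_singleton.mpr ⟨hqs, hdeg ▸ hr_pos, hdeg ▸ hr_le⟩,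
    upper_mem_boundedUpper (-u) (q := 1) (by simp), by rw [one_mul]⟩

theorem HasNormalForm.mul_w {N : ℕ} {g : SL(2, F[X])} (hg : HasNormalForm N g) :
    HasNormalForm N (g * w) := by
  obtain ⟨h, ps, _, hh, hps, ⟨u, q, hq, rfl⟩, rfl⟩ := hg
  obtain ⟨v, ps', hps', hpush⟩ := exists_word_mul_upper_zero hps u
  have hm : (↑u⁻¹ * q).degree ≤ N := by
    simpa [degree_mul, degree_coe_units, -Units.val_inv_eq_inv_val] using hq
  have := (hasNormalForm_word_mul_ew hps' hm).constant_mul (hh.mul (isConstant_upper_zero v))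
  rwa [mul_assoc, upper_mul_w, ← mul_assoc, mul_assoc h, hpush, ← mul_assoc, mul_assoc]

theorem hasNormalForm_of_mem_degreeSubgroup {N : ℕ} {g : SL(2, F[X])}
    (hg : g ∈ degreeSubgroup N) : HasNormalForm N g := by
  unfold degreeSubgroup at hg
  induction hg using Subgroup.closure_induction_right with
  | one => exact hasNormalForm_one N
  | mul_right x _ y hy ih =>
    rcases hy with rfl | hy
    · exact ih.mul_w
    · exact ih.mul_of_mem_boundedUpper hy
  | mul_inv_cancel x _ y hy ih =>
    rcases hy with rfl | hy
    · rw [w_inv, ← mul_assoc]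
      exact ih.mul_w.mul_of_mem_boundedUpper (upper_mem_boundedUpper _ (by simp))
    · exact ih.mul_of_mem_boundedUpper (inv_mem hy)

theorem degree_word_apply_one_zero_lt {ps : List F[X]} (hps : ∀ p ∈ ps, 0 < p.degree) :
    (word ps 1 0).degree < (word ps 0 0).degree := by
  induction ps with
  | nil => simp [word_nil]
  | cons p ps ih =>
    have hp := hps p List.mem_cons_self
    have hlt := ih fun q hq => hps q (List.mem_cons_of_mem p hq)
    have hx : word ps 0 0 ≠ 0 := fun h0 => by simp [h0] at hlt
    have hmul := degree_lt_degree_mul_of_degree_pos (by rwa [degree_neg]) hx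
    rw [word_cons_apply_zero_zero, word_cons_apply_one_zero, degree_neg,
      degree_add_eq_left_of_degree_lt (hlt.trans hmul)]
    exact hmul

theorem word_apply_one_zero_ne_zero {ps : List F[X]} (hps : ∀ p ∈ ps, 0 < p.degree)
    (hne : ps ≠ []) : word ps 1 0 ≠ 0 := by
  obtain ⟨p, ps, rfl⟩ := List.exists_cons_of_ne_nil hne
  have hlt := degree_word_apply_one_zero_lt fun q hq => hps q (List.mem_cons_of_mem p hq)
  rw [word_cons_apply_one_zero, neg_ne_zero]
  exact fun h0 => by simp [h0] at hlt

theorem HasNormalForm.degree_apply_zero_one_le {N : ℕ} {g : SL(2, F[X])} (hg : HasNormalForm N g)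
    (h10 : g 1 0 = 0) : (g 0 1).degree ≤ N := by
  obtain ⟨h, ps, _, hh, hps, ⟨u, q, hq, rfl⟩, rfl⟩ := hg
  rcases eq_or_ne ps [] with rfl | hne
  · have hentry : (h * word [] * upper u q : SL(2, F[X])) 0 1 = h 0 0 * q + h 0 1 * ↑u⁻¹ := by
      simp [word_nil, mul_apply]
    rw [hentry]
    refine (degree_add_le _ _).trans (max_le ?_ ?_) <;> refine (degree_mul_le _ _).trans ?_
    · simpa using add_le_add (hh 0 0) hq
    · rw [degree_coe_units, add_zero]
      exact (hh 0 1).trans (WithBot.coe_le_coe.mpr N.zero_le)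
  · exfalso
    have hdet : h 0 0 * h 1 1 - h 0 1 * h 1 0 = 1 := by rw [← det_fin_two]; exact h.2
    have h_ne : h 1 0 ≠ 0 ∨ h 1 1 ≠ 0 := by
      by_contra! h0
      simp [h0.1, h0.2] at hdet
    have hpos := fun p hp => (hps p hp).1
    refine add_mul_ne_zero_of_degree_lt (hh 1 0) (hh 1 1) h_ne
      (degree_word_apply_one_zero_lt hpos) (word_apply_one_zero_ne_zero hpos hne) ?_
    simpa [mul_apply] using h10

end Polynomial

end Nagao

theorem sl2_polynomial_not_finitely_generated_general (F : Type*) [Field F] :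
    ¬ Group.FG (Matrix.SpecialLinearGroup (Fin 2) (Polynomial F)) := by
  open Nagao in
  rintro ⟨S, hS⟩
  choose f hf using exists_mem_degreeSubgroup (F := F)
  set N := S.sup f
  have htop : ⊤ ≤ degreeSubgroup (F := F) N := hS ▸ (Subgroup.closure_le _).mpr
    fun s hs => degreeSubgroup_mono (Finset.le_sup hs) (hf s)
  have := (hasNormalForm_of_mem_degreeSubgroup (htop (Subgroup.mem_top (upper 1 (X ^ (N + 1))))))
    |>.degree_apply_zero_one_le (by simp)
  simp at this
  norm_cast at this
  omega

/-- **Nagao's theorem.** For every finite field `F`, the group `SL₂(F[t])` of `2 × 2`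
matrices of determinant `1` over the polynomial ring `F[t]` is not finitely
generated. -/
theorem sl2_polynomial_not_finitely_generated (F : Type*) [Field F] [Finite F] :
    ¬ Group.FG (Matrix.SpecialLinearGroup (Fin 2) (Polynomial F)) :=
  sl2_polynomial_not_finitely_generated_general F
end

section
/- Every finite group is involved in SL(2,ℤ): for every finite group H, there exist a finite-index subgroup K of SL(2,ℤ) and a surjective group homomorphism from K onto H. -/
/-!
The matrices `A = [[1, 2], [0, 1]]` and `B = [[1, 0], [2, 1]]` generate a free subgroup of
`SL(2, ℤ)` (Sanov): they play ping-pong on the slopes of nonzero integer vectors, `A` acting as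
`x ↦ x + 2` and `B` as `1 / x ↦ 1 / x + 2`. A Euclidean descent on the first column shows that
every matrix of `Γ(2)` lies in `± ⟨A, B⟩`, so `⟨A, B⟩` has finite index. A finite group embeds
into a symmetric group, which is generated by two elements and hence a quotient of the free group
`⟨A, B⟩`; the preimage of the copy of the finite group is the required finite-index subgroup.
-/

open Matrix MatrixGroups ModularGroup CongruenceSubgroup

def IsInvolvedIn (H G : Type*) [Group H] [Group G] : Prop :=
  ∃ K : Subgroup G, K.FiniteIndex ∧ ∃ f : K →* H, Function.Surjective f

namespace IsInvolvedIn

variable {H P G : Type*} [Group H] [Group P] [Group G]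

theorem of_injective [Finite P] {ι : H →* P} (hι : Function.Injective ι) : IsInvolvedIn H P :=
  ⟨ι.range, inferInstance, (MonoidHom.ofInjective hι).symm.toMonoidHom,
    (MonoidHom.ofInjective hι).symm.surjective⟩

theorem trans (hHP : IsInvolvedIn H P) (hPG : IsInvolvedIn P G) : IsInvolvedIn H G := by
  obtain ⟨L, hL, g, hg⟩ := hHP
  obtain ⟨K, hK, f, hf⟩ := hPG
  let K' : Subgroup K := L.comap f
  have hK' : K'.FiniteIndex :=
    ⟨by rw [Subgroup.index_comap_of_surjective _ hf]; exact hL.index_ne_zero⟩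
  refine ⟨K'.map K.subtype, ⟨?_⟩, (g.comp (f.subgroupComap L)).comp
      (K'.equivMapOfInjective K.subtype K.subtype_injective).symm.toMonoidHom, ?_⟩
  · rw [Subgroup.index_map_subtype]
    exact mul_ne_zero hK'.index_ne_zero hK.index_ne_zero
  · exact (hg.comp (f.subgroupComap_surjective_of_surjective L hf)).comp (MulEquiv.surjective _)

end IsInvolvedIn

theorem Equiv.Perm.closure_finRotate_swap_zero_one (n : ℕ) :
    Subgroup.closure ({finRotate (n + 2), swap 0 1} : Set (Perm (Fin (n + 2)))) = ⊤ := by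
  simpa using closure_cycle_adjacent_swap isCycle_finRotate support_finRotate (0 : Fin (n + 2))

theorem exists_injective_monoidHom_perm_fin (H : Type*) [Group H] [Finite H] {n : ℕ}
    (hn : Nat.card H ≤ n) : ∃ ι : H →* Equiv.Perm (Fin n), Function.Injective ι := by
  have := Fintype.ofFinite H
  obtain ⟨e⟩ := Function.Embedding.nonempty_of_card_le (α := H) (β := Fin n)
    (by simpa [Nat.card_eq_fintype_card] using hn)
  exact ⟨(Equiv.Perm.viaEmbeddingHom e).comp (MulAction.toPermHom H H),
    (Equiv.Perm.viaEmbeddingHom_injective e).comp MulAction.toPerm_injective⟩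

theorem Subgroup.finiteIndex_of_le_of_forall_mem_or_mul_mem {G : Type*} [Group G]
    {H K : Subgroup G} [K.FiniteIndex] (hHK : H ≤ K) {z : G} (hz : z ∈ K)
    (h : ∀ x ∈ K, x ∈ H ∨ z * x ∈ H) : H.FiniteIndex := by
  have : Finite (K ⧸ H.subgroupOf K) := by
    refine Finite.of_surjective
      (fun b : Bool => if b then ((1 : K) : K ⧸ H.subgroupOf K) else ((⟨z, hz⟩⁻¹ : K) : _)) ?_
    rintro ⟨x⟩
    rcases h x x.2 with hx | hx
    · exact ⟨true, QuotientGroup.eq.2 (by simpa [mem_subgroupOf] using hx)⟩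
    · exact ⟨false, QuotientGroup.eq.2 (by simpa [mem_subgroupOf] using hx)⟩
  have : (H.subgroupOf K).FiniteIndex := finiteIndex_of_finite_quotient
  refine ⟨?_⟩
  rw [← relIndex_mul_index hHK]
  exact mul_ne_zero this.index_ne_zero FiniteIndex.index_ne_zero

theorem Int.exists_natAbs_add_two_mul_le (a c : ℤ) (hc : c ≠ 0) :
    ∃ q : ℤ, (a + 2 * q * c).natAbs ≤ c.natAbs := by
  have h2c : 2 * c ≠ 0 := by omega
  refine ⟨-((a + c.natAbs) / (2 * c)), ?_⟩
  have hdiv := Int.emod_add_mul_ediv (a + c.natAbs) (2 * c)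
  have hlo := Int.emod_nonneg (a + c.natAbs) h2c
  have hhi := Int.emod_lt (a + c.natAbs) h2c
  have : a + 2 * -((a + c.natAbs) / (2 * c)) * c = (a + c.natAbs) % (2 * c) - c.natAbs := by
    linarith
  omega

def nonzeroSubMul (G M : Type*) [Group G] [AddMonoid M] [DistribMulAction G M] :
    SubMulAction G M where
  carrier := {x | x ≠ 0}
  smul_mem' g _ hx := (smul_ne_zero_iff_ne g).2 hx

@[simp]
theorem mem_nonzeroSubMul {G M : Type*} [Group G] [AddMonoid M] [DistribMulAction G M] {x : M} :
    x ∈ nonzeroSubMul G M ↔ x ≠ 0 :=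
  Iff.rfl

theorem mul_self_add_mul_self_pos {R : Type*} [CommRing R] [LinearOrder R] [IsStrictOrderedRing R]
    {v : Fin 2 → R} (hv : v ≠ 0) : 0 < v 0 * v 0 + v 1 * v 1 := by
  by_contra! h
  have h0 := mul_self_nonneg (v 0)
  have h1 := mul_self_nonneg (v 1)
  exact hv (funext (Fin.forall_fin_two.2
    ⟨mul_self_eq_zero.1 (by linarith), mul_self_eq_zero.1 (by linarith)⟩))

namespace Sanov

def A : SL(2, ℤ) := T ^ (2 : ℤ)

def B : SL(2, ℤ) := S * A⁻¹ * S⁻¹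

theorem coe_A_zpow (k : ℤ) :
    ((A ^ k : SL(2, ℤ)) : Matrix (Fin 2) (Fin 2) ℤ) = !![1, 2 * k; 0, 1] := by
  rw [A, ← _root_.zpow_mul, coe_T_zpow]

theorem coe_B_zpow (k : ℤ) :
    ((B ^ k : SL(2, ℤ)) : Matrix (Fin 2) (Fin 2) ℤ) = !![1, 0; 2 * k, 1] := by
  rw [B, conj_zpow, _root_.inv_zpow', Matrix.SpecialLinearGroup.coe_mul,
    Matrix.SpecialLinearGroup.coe_mul, coe_A_zpow, S_inv, Matrix.SpecialLinearGroup.coe_neg, coe_S]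
  simp

theorem A_zpow_smul (k : ℤ) (v : Fin 2 → ℤ) : A ^ k • v = ![v 0 + 2 * k * v 1, v 1] := by
  change ((A ^ k : SL(2, ℤ)) : Matrix (Fin 2) (Fin 2) ℤ) *ᵥ v = _
  rw [coe_A_zpow]
  ext i
  fin_cases i <;> simp [mulVec, dotProduct, Fin.sum_univ_two]

theorem B_zpow_smul (k : ℤ) (v : Fin 2 → ℤ) : B ^ k • v = ![v 0, v 1 + 2 * k * v 0] := by
  change ((B ^ k : SL(2, ℤ)) : Matrix (Fin 2) (Fin 2) ℤ) *ᵥ v = _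
  rw [coe_B_zpow]
  ext i
  fin_cases i <;> simp [mulVec, dotProduct, Fin.sum_univ_two, add_comm]

/- In terms of the slope `a / c ∈ ℚ ∪ {∞}` of `v = (a, c)`, the ping-pong sets are
`X 0 = (1, ∞]`, `Y 0 = (-∞, -1]`, `X 1 = [0, 1]` and `Y 1 = (-1, 0)`. -/
def X : Fin 2 → Set (nonzeroSubMul SL(2, ℤ) (Fin 2 → ℤ)) :=
  ![{v | v.1 1 * v.1 1 < v.1 0 * v.1 1 ∨ v.1 1 = 0}, {v | v.1 0 * v.1 0 ≤ v.1 0 * v.1 1}]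

def Y : Fin 2 → Set (nonzeroSubMul SL(2, ℤ) (Fin 2 → ℤ)) :=
  ![{v | v.1 0 * v.1 1 + v.1 1 * v.1 1 ≤ 0 ∧ v.1 1 ≠ 0},
    {v | v.1 0 * v.1 1 + v.1 0 * v.1 0 < 0}]

theorem injective_lift : Function.Injective (FreeGroup.lift ![A, B]) := by
  have hA : ∀ v : Fin 2 → ℤ, A • v = ![v 0 + 2 * v 1, v 1] := by simpa using A_zpow_smul 1
  have hA' : ∀ v : Fin 2 → ℤ, A⁻¹ • v = ![v 0 - 2 * v 1, v 1] := by
    simpa [sub_eq_add_neg] using A_zpow_smul (-1)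
  have hB : ∀ v : Fin 2 → ℤ, B • v = ![v 0, v 1 + 2 * v 0] := by simpa using B_zpow_smul 1
  have hB' : ∀ v : Fin 2 → ℤ, B⁻¹ • v = ![v 0, v 1 - 2 * v 0] := by
    simpa [sub_eq_add_neg] using B_zpow_smul (-1)
  refine FreeGroup.injective_lift_of_ping_pong ![A, B] X Y
    ?nonempty ?disjointX ?disjointY ?disjointXY ?mapsToX ?mapsToY
  case nonempty =>
    intro i
    fin_cases i
    · exact ⟨⟨![1, 0], fun h => by simpa using congrFun h 0⟩, by simp [X]⟩
    · exact ⟨⟨![0, 1], fun h => by simpa using congrFun h 1⟩, by simp [X]⟩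
  all_goals
    simp only [pairwise_fin_succ_iff_of_isSymm, Fin.forall_fin_two, Set.disjoint_left,
      Set.smul_set_subset_iff, Subtype.forall, mem_nonzeroSubMul]
    simp only [X, Y, ne_eq, Fin.isValue, cons_val_zero, cons_val_one, cons_val_succ,
      cons_val_fin_one, Set.mem_ofPred_eq, Set.mem_compl_iff, not_le, not_lt, not_and, not_or,
      Decidable.not_not, and_imp, forall_const, Subsingleton.pairwise, and_true, Pi.inv_apply,
      SetLike.mk_smul_mk, hA, hA', hB, hB']
  case disjointX =>
    rintro v hv (h | h)
    · nlinarith [mul_self_nonneg (v 0 - v 1)]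
    · simpa [h] using mul_self_add_mul_self_pos hv
  case disjointY =>
    intro v _ h _
    nlinarith [mul_self_nonneg (v 0 + v 1)]
  case disjointXY =>
    refine ⟨⟨?_, ?_⟩, ?_, ?_⟩
    · rintro v _ (h | h) h'
      · nlinarith [mul_self_nonneg (v 1)]
      · exact h
    · rintro v _ (h | h)
      · nlinarith [mul_self_nonneg (v 1)]
      · simpa [h] using mul_self_nonneg (v 0)
    · intro v _ h h'
      exact mul_self_eq_zero.1 (by nlinarith [mul_self_nonneg (v 0), mul_self_nonneg (v 1)])
    · intro v _ h
      nlinarith [mul_self_nonneg (v 0)]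
  case mapsToX =>
    refine ⟨fun v _ h => ?_, fun v _ h => by nlinarith⟩
    by_cases hc : v 1 = 0
    · exact Or.inr hc
    · exact Or.inl (by nlinarith [lt_of_not_ge (mt h hc)])
  case mapsToY =>
    exact ⟨fun v _ h hc => ⟨by nlinarith, hc⟩, fun v _ h => by nlinarith⟩

def subgroup : Subgroup SL(2, ℤ) := (FreeGroup.lift ![A, B]).range

theorem A_mem_subgroup : A ∈ subgroup := ⟨FreeGroup.of 0, by simp⟩

theorem B_mem_subgroup : B ∈ subgroup := ⟨FreeGroup.of 1, by simp⟩

theorem subgroup_le_Gamma_two : subgroup ≤ Gamma 2 := by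
  have hA : A ∈ Gamma 2 := ModularGroup_T_pow_mem_Gamma 2 2 dvd_rfl
  rw [subgroup, FreeGroup.range_lift_eq_closure, Matrix.range_cons_cons_empty,
    Subgroup.closure_le, Set.insert_subset_iff, Set.singleton_subset_iff]
  exact ⟨hA, (Gamma_normal 2).conj_mem _ (inv_mem hA) S⟩

theorem exists_mem_subgroup_natAbs_lt {v : Fin 2 → ℤ} (h0 : Odd (v 0)) (h1 : Even (v 1))
    (hv1 : v 1 ≠ 0) :
    ∃ g ∈ subgroup, ((g • v) 0).natAbs + ((g • v) 1).natAbs < (v 0).natAbs + (v 1).natAbs := by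
  have h0' := Int.odd_iff.1 h0
  have h1' := Int.even_iff.1 h1
  rcases lt_or_gt_of_ne (show (v 0).natAbs ≠ (v 1).natAbs by omega) with h | h
  · obtain ⟨q, hq⟩ := Int.exists_natAbs_add_two_mul_le (v 1) (v 0) (by omega)
    refine ⟨B ^ q, zpow_mem B_mem_subgroup q, ?_⟩
    simp only [B_zpow_smul, cons_val_zero, cons_val_one]
    omega
  · obtain ⟨q, hq⟩ := Int.exists_natAbs_add_two_mul_le (v 0) (v 1) hv1
    refine ⟨A ^ q, zpow_mem A_mem_subgroup q, ?_⟩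
    simp only [A_zpow_smul, cons_val_zero, cons_val_one]
    omega

theorem parity_of_mem_Gamma_two {M : SL(2, ℤ)} (hM : M ∈ Gamma 2) :
    Odd (M 0 0) ∧ Even (M 0 1) ∧ Even (M 1 0) ∧ Odd (M 1 1) := by
  simpa [ZMod.intCast_eq_one_iff_odd, ZMod.intCast_eq_zero_iff_even] using Gamma_mem.1 hM

theorem mem_subgroup_or_neg_mem_of_apply_one_zero_eq_zero {M : SL(2, ℤ)} (hM : M ∈ Gamma 2)
    (hc : M 1 0 = 0) : M ∈ subgroup ∨ -M ∈ subgroup := by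
  obtain ⟨-, ⟨k, hk⟩, -, -⟩ := parity_of_mem_Gamma_two hM
  have hdet : M 0 0 * M 1 1 = 1 := by
    have := M.det_coe
    rwa [Matrix.det_fin_two, hc, mul_zero, sub_zero] at this
  rcases Int.eq_one_or_neg_one_of_mul_eq_one' hdet with ⟨ha, hd⟩ | ⟨ha, hd⟩
  · left
    convert zpow_mem A_mem_subgroup k
    ext i j
    fin_cases i <;> fin_cases j <;> simp [coe_A_zpow, ha, hd, hc, hk, two_mul]
  · right
    convert zpow_mem A_mem_subgroup (-k)
    ext i j
    fin_cases i <;> fin_cases j <;> simp [coe_A_zpow, ha, hd, hc, hk, two_mul]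

theorem mem_subgroup_or_neg_mem_of_mem_Gamma_two {M : SL(2, ℤ)} (hM : M ∈ Gamma 2) :
    M ∈ subgroup ∨ -M ∈ subgroup := by
  obtain ⟨ha, -, hc, -⟩ := parity_of_mem_Gamma_two hM
  by_cases hc0 : M 1 0 = 0
  · exact mem_subgroup_or_neg_mem_of_apply_one_zero_eq_zero hM hc0
  obtain ⟨g, hg, hlt⟩ := exists_mem_subgroup_natAbs_lt (v := fun i => M i 0) ha hc hc0
  have hgM := mem_subgroup_or_neg_mem_of_mem_Gamma_two (mul_mem (subgroup_le_Gamma_two hg) hM)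
  rw [← mul_neg] at hgM
  exact hgM.imp (fun h => by simpa using mul_mem (inv_mem hg) h)
    (fun h => by simpa using mul_mem (inv_mem hg) h)
termination_by (M 0 0).natAbs + (M 1 0).natAbs
decreasing_by exact hlt

theorem finiteIndex_subgroup : subgroup.FiniteIndex :=
  Subgroup.finiteIndex_of_le_of_forall_mem_or_mul_mem subgroup_le_Gamma_two
    (z := -1) (by simp [Gamma_mem]) fun M hM => by
      simpa using mem_subgroup_or_neg_mem_of_mem_Gamma_two hM

end Sanov

theorem isInvolvedIn_SL2Z_of_closure_eq_top {P : Type*} [Group P] {x y : P}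
    (h : Subgroup.closure {x, y} = ⊤) : IsInvolvedIn P SL(2, ℤ) := by
  have hsurj : Function.Surjective (FreeGroup.lift ![x, y]) := by
    rw [← MonoidHom.range_eq_top, FreeGroup.range_lift_eq_closure, Matrix.range_cons_cons_empty, h]
  exact ⟨Sanov.subgroup, Sanov.finiteIndex_subgroup,
    (FreeGroup.lift ![x, y]).comp (MonoidHom.ofInjective Sanov.injective_lift).symm.toMonoidHom,
    hsurj.comp (MulEquiv.surjective _)⟩

/-- Every finite group is involved in `SL(2, ℤ)`: for every finite group `H` there
are a finite-index subgroup `K ≤ SL(2, ℤ)` and a surjective group homomorphism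
`K →* H`. -/
theorem finite_group_involved_in_SL2Z (H : Type*) [Group H] [Finite H] :
    ∃ K : Subgroup (Matrix.SpecialLinearGroup (Fin 2) ℤ),
      K.FiniteIndex ∧ ∃ f : K →* H, Function.Surjective f := by
  obtain ⟨ι, hι⟩ := exists_injective_monoidHom_perm_fin H (n := Nat.card H + 2) (by omega)
  exact (IsInvolvedIn.of_injective hι).trans
    (isInvolvedIn_SL2Z_of_closure_eq_top (Equiv.Perm.closure_finRotate_swap_zero_one _))
end
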